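/- arXiv:1605.03113 — 2 statements merged into one kernel-verified Lean document; each statement's English description precedes it below -/
import Mathlib

section
/- Let k be an algebraically closed field of characteristic 0 and ζ ∈ k a primitive 3rd root of unity. Let the 2×2 braiding matrix be q_{11} = ζ, q_{12} = −1, q_{21} = 1, q_{22} = −1 (modular type br(2,a) with q = −1). Then for every λ₁, λ₂, λ₃ ∈ k, the quotient of the free algebra k⟨y_1,y_2⟩ by the two-sided ideal generated by y_1³ − λ₁, y_2² − λ₂, and [y_{112}, y_{12}]_c − λ₃ is a nontrivial algebra. -/
/-! Every relator is killed by an algebra map to `6 × 6` matrices, so the ideal they generate is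
proper. The matrices are weighted shifts of the basis indexed by `ℤ/3 × ℤ/2`: `y₁` moves the first
coordinate and `y₂` the second. Weighted shifts multiply by adding the shifts, so `y₁³`, `y₂²` and
`[y₁₁₂, y₁₂]_c`, of degrees `(3, 0)`, `(0, 2)` and `(3, 2)`, are diagonal, and it suffices to make
their weights constant. If `λ₁ ≠ 0`, let `y₁` act by scalars between the three fibres `k²` and `y₂`
by the antidiagonal blocks `P, P, Q` with `P² = Q² = rs`; then `[y₁₁₂, y₁₂]_c = λ₁ (P + Q)²
= λ₁ (r + s)²`, and `r, s` are found by solving quadratic equations. If `λ₁ = 0`, a suitable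
nilpotent weighted shift `y₁` does the job. -/

/-- The `q`-bilinear form `q(α,β) = ∏ i j, (q i j) ^ (α i * β j)` on `ℕⁿ`-degrees. -/
noncomputable def qForm {k : Type*} [Field k] {n : ℕ} (q : Fin n → Fin n → k)
    (α β : Fin n → ℕ) : k :=
  ∏ i : Fin n, ∏ j : Fin n, q i j ^ (α i * β j)

/-- The braided commutator on pairs (homogeneous element, its `ℕⁿ`-degree):
`[u,v]_c = u v − q(deg u, deg v) v u`. -/
noncomputable def bc {k : Type*} [Field k] {n : ℕ} (q : Fin n → Fin n → k)
    (u v : FreeAlgebra k (Fin n) × (Fin n → ℕ)) :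
    FreeAlgebra k (Fin n) × (Fin n → ℕ) :=
  (u.1 * v.1 - qForm q u.2 v.2 • (v.1 * u.1), fun i => u.2 i + v.2 i)

/-- The generator `y i` of the free algebra, together with its degree `e_i`. -/
noncomputable def ygen (k : Type*) [Field k] {n : ℕ} (i : Fin n) :
    FreeAlgebra k (Fin n) × (Fin n → ℕ) :=
  (FreeAlgebra.ι k i, fun j => if j = i then 1 else 0)

open Matrix Finset

section QComm

variable {k A : Type*} [CommRing k] [Ring A] [Algebra k A]

def qComm (c : k) (a b : A) : A :=
  a * b - c • (b * a)

/-- `[[a, [a, b]_c]_c, [a, b]_c]_c` for the braiding `q = ![![ζ, -1], ![1, -1]]`, whose values on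
the degrees involved are `-1`, `-ζ` and `-ζ²`. -/
def braidedRelator (ζ : k) (a b : A) : A :=
  qComm (-ζ ^ 2) (qComm (-ζ) a (qComm (-1 : k) a b)) (qComm (-1 : k) a b)

theorem AlgHom.map_braidedRelator {B : Type*} [Ring B] [Algebra k B] (f : A →ₐ[k] B) (ζ : k)
    (a b : A) : f (braidedRelator ζ a b) = braidedRelator ζ (f a) (f b) := by
  simp [braidedRelator, qComm]

end QComm

theorem bc_eq_braidedRelator {k : Type*} [Field k] (ζ : k) (q : Fin 2 → Fin 2 → k)
    (hq : q = ![![ζ, -1], ![1, -1]]) :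
    (bc q (bc q (ygen k 0) (bc q (ygen k 0) (ygen k 1))) (bc q (ygen k 0) (ygen k 1))).1 =
      braidedRelator ζ (FreeAlgebra.ι k 0) (FreeAlgebra.ι k 1) := by
  subst hq
  simp [bc, ygen, qForm, braidedRelator, qComm, Fin.prod_univ_two]

theorem TwoSidedIdeal.one_notMem_span_of_ringHom {R S : Type*} [Ring R] [Ring S] [Nontrivial S]
    (f : R →+* S) {s : Set R} (hs : ∀ x ∈ s, f x = 0) : (1 : R) ∉ TwoSidedIdeal.span s := by
  intro h
  have := TwoSidedIdeal.span_le.2 (fun x hx => (TwoSidedIdeal.mem_ker f).2 (hs x hx)) h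
  simp [TwoSidedIdeal.mem_ker] at this

section ShiftMatrix

variable {G R : Type*} [AddCommMonoid G] [DecidableEq G]

def shiftMatrix [Zero R] (g : G) (w : G → R) : Matrix G G R :=
  Matrix.of fun p q => if p = q + g then w q else 0

theorem shiftMatrix_zero [Zero R] (w : G → R) : shiftMatrix 0 w = diagonal w := by
  ext p q
  by_cases hpq : p = q <;> simp [shiftMatrix, hpq]

variable [Fintype G]

theorem shiftMatrix_mul [NonUnitalNonAssocSemiring R] (g h : G) (w v : G → R) :
    shiftMatrix g w * shiftMatrix h v = shiftMatrix (g + h) fun q => w (q + h) * v q := by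
  ext p q
  simp only [shiftMatrix, mul_apply, of_apply, ite_mul, zero_mul, mul_ite, mul_zero]
  rw [sum_eq_single (q + h)]
  · simp [add_comm g h, add_assoc]
  · intro r _ hr
    simp [hr]
  · simp

theorem shiftMatrix_pow [CommSemiring R] (g : G) (w : G → R) (n : ℕ) :
    shiftMatrix g w ^ n = shiftMatrix (n • g) fun q => ∏ i ∈ range n, w (q + i • g) := by
  induction n with
  | zero => simp [shiftMatrix_zero]
  | succ n ih =>
    rw [pow_succ, ih, shiftMatrix_mul, succ_nsmul]
    congr 1
    funext q
    rw [prod_range_succ']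
    simp [add_assoc, add_comm g, succ_nsmul]

theorem shiftMatrix_eq_algebraMap [CommSemiring R] {g : G} (hg : g = 0) {w : G → R} {c : R}
    (hw : ∀ q, w q = c) : shiftMatrix g w = algebraMap R (Matrix G G R) c := by
  subst hg
  rw [shiftMatrix_zero, algebraMap_eq_diagonal]
  exact congrArg diagonal (funext hw)

theorem qComm_shiftMatrix [CommRing R] (c : R) (g h : G) (w v : G → R) :
    qComm c (shiftMatrix g w) (shiftMatrix h v) =
      shiftMatrix (g + h) fun q => w (q + h) * v q - c * (v (q + g) * w q) := by
  rw [qComm, shiftMatrix_mul, shiftMatrix_mul, add_comm h g]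
  ext p q
  by_cases hpq : p = q + (g + h) <;> simp [shiftMatrix, hpq]

end ShiftMatrix

section WeightedShifts

variable {k : Type*} [CommRing k]

theorem exists_shiftMatrix_relations_zero (ζ : k) (hζ : ζ ^ 2 + ζ + 1 = 0) (l₂ l₃ : k) :
    ∃ A B : Matrix (Fin 3 × Fin 2) (Fin 3 × Fin 2) k, A ^ 3 = 0 ∧ B ^ 2 = algebraMap k _ l₂ ∧
      braidedRelator ζ A B = algebraMap k _ l₃ := by
  refine ⟨shiftMatrix (1, 0) (Function.uncurry ![![0, l₃], ![1, 1], ![1, 0]]),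
    shiftMatrix (0, 1) (Function.uncurry ![![1, l₂], ![l₂, 1], ![l₂, 1]]), ?_, ?_, ?_⟩
  · rw [shiftMatrix_pow, ← map_zero (algebraMap k (Matrix (Fin 3 × Fin 2) (Fin 3 × Fin 2) k))]
    refine shiftMatrix_eq_algebraMap (by decide) fun q => ?_
    fin_cases q <;> simp [prod_range_succ, two_nsmul]
  · rw [shiftMatrix_pow]
    refine shiftMatrix_eq_algebraMap (by decide) fun q => ?_
    fin_cases q <;> simp [prod_range_succ]
  · rw [braidedRelator, qComm_shiftMatrix, qComm_shiftMatrix, qComm_shiftMatrix]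
    refine shiftMatrix_eq_algebraMap (by decide) fun q => ?_
    fin_cases q <;>
      simp only [Prod.mk_add_mk, Fin.reduceAdd, Fin.reduceFinMk, Function.uncurry_apply_pair,
        Matrix.cons_val] <;>
      grind

theorem exists_shiftMatrix_relations_mul_add_sq (ζ : k) (hζ : ζ ^ 2 + ζ + 1 = 0) (m r s : k) :
    ∃ A B : Matrix (Fin 3 × Fin 2) (Fin 3 × Fin 2) k, A ^ 3 = algebraMap k _ m ∧
      B ^ 2 = algebraMap k _ (r * s) ∧ braidedRelator ζ A B = algebraMap k _ (m * (r + s) ^ 2) := by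
  refine ⟨shiftMatrix (1, 0) (Function.uncurry ![![m, m], ![1, 1], ![1, 1]]),
    shiftMatrix (0, 1) (Function.uncurry ![![r, s], ![r, s], ![s, r]]), ?_, ?_, ?_⟩
  · rw [shiftMatrix_pow]
    refine shiftMatrix_eq_algebraMap (by decide) fun q => ?_
    fin_cases q <;> simp [prod_range_succ, two_nsmul]
  · rw [shiftMatrix_pow]
    refine shiftMatrix_eq_algebraMap (by decide) fun q => ?_
    fin_cases q <;> simp [prod_range_succ, mul_comm]
  · rw [braidedRelator, qComm_shiftMatrix, qComm_shiftMatrix, qComm_shiftMatrix]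
    refine shiftMatrix_eq_algebraMap (by decide) fun q => ?_
    fin_cases q <;>
      simp only [Prod.mk_add_mk, Fin.reduceAdd, Fin.reduceFinMk, Function.uncurry_apply_pair,
        Matrix.cons_val] <;>
      grind

end WeightedShifts

open Polynomial in
theorem IsAlgClosed.exists_add_eq_and_mul_eq {k : Type*} [Field k] [IsAlgClosed k] (σ π : k) :
    ∃ r s : k, r + s = σ ∧ r * s = π := by
  obtain ⟨r, hr⟩ := IsAlgClosed.exists_root (C 1 * X ^ 2 + C (-σ) * X + C π)
    (by rw [degree_quadratic one_ne_zero]; decide)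
  have hr : r ^ 2 - σ * r + π = 0 := by simpa [sub_eq_add_neg] using hr
  exact ⟨r, σ - r, by ring, by linear_combination -hr⟩

theorem exists_matrix_relations {k : Type*} [Field k] [IsAlgClosed k] (ζ : k)
    (hζ : ζ ^ 2 + ζ + 1 = 0) (l₁ l₂ l₃ : k) :
    ∃ A B : Matrix (Fin 3 × Fin 2) (Fin 3 × Fin 2) k, A ^ 3 = algebraMap k _ l₁ ∧
      B ^ 2 = algebraMap k _ l₂ ∧ braidedRelator ζ A B = algebraMap k _ l₃ := by
  rcases eq_or_ne l₁ 0 with rfl | hl₁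
  · simpa using exists_shiftMatrix_relations_zero ζ hζ l₂ l₃
  · obtain ⟨σ, hσ⟩ := IsAlgClosed.exists_eq_mul_self (l₃ / l₁)
    obtain ⟨r, s, hσrs, hrs⟩ := IsAlgClosed.exists_add_eq_and_mul_eq σ l₂
    have hl₃ : l₁ * (r + s) ^ 2 = l₃ := by
      rw [hσrs, sq, ← hσ, mul_div_cancel₀ _ hl₁]
    simpa [hrs, hl₃] using exists_shiftMatrix_relations_mul_add_sq ζ hζ l₁ r s

theorem statement_9_general {k : Type*} [Field k] [IsAlgClosed k]
    (ζ : k) (hζ : IsPrimitiveRoot ζ 3)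
    (lam₁ lam₂ lam₃ : k)
    (q : Fin 2 → Fin 2 → k) (hq : q = ![![ζ, -1], ![1, -1]]) :
    (1 : FreeAlgebra k (Fin 2)) ∉ TwoSidedIdeal.span
      ({FreeAlgebra.ι k (0 : Fin 2) ^ 3 - algebraMap k (FreeAlgebra k (Fin 2)) lam₁,
        FreeAlgebra.ι k (1 : Fin 2) ^ 2 - algebraMap k (FreeAlgebra k (Fin 2)) lam₂,
        (bc q (bc q (ygen k 0) (bc q (ygen k 0) (ygen k 1))) (bc q (ygen k 0) (ygen k 1))).1 - algebraMap k (FreeAlgebra k (Fin 2)) lam₃} : Set (FreeAlgebra k (Fin 2))) := by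
  have hζ' : ζ ^ 2 + ζ + 1 = 0 := by
    have := hζ.geom_sum_eq_zero (by norm_num)
    simp only [sum_range_succ, sum_range_zero] at this
    linear_combination this
  obtain ⟨A, B, hA, hB, hAB⟩ := exists_matrix_relations ζ hζ' lam₁ lam₂ lam₃
  let φ := FreeAlgebra.lift k ![A, B]
  refine TwoSidedIdeal.one_notMem_span_of_ringHom φ.toRingHom ?_
  rintro x (rfl | rfl | rfl)
  · simp [φ, hA]
  · simp [φ, hB]
  · simp [φ, bc_eq_braidedRelator ζ q hq, AlgHom.map_braidedRelator, hAB]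

theorem statement_9 {k : Type*} [Field k] [IsAlgClosed k] [CharZero k]
    (ζ : k) (hζ : IsPrimitiveRoot ζ 3)
    (lam₁ lam₂ lam₃ : k)
    (q : Fin 2 → Fin 2 → k) (hq : q = ![![ζ, -1], ![1, -1]]) :
    (1 : FreeAlgebra k (Fin 2)) ∉ TwoSidedIdeal.span
      ({FreeAlgebra.ι k (0 : Fin 2) ^ 3 - algebraMap k (FreeAlgebra k (Fin 2)) lam₁,
        FreeAlgebra.ι k (1 : Fin 2) ^ 2 - algebraMap k (FreeAlgebra k (Fin 2)) lam₂,
        (bc q (bc q (ygen k 0) (bc q (ygen k 0) (ygen k 1))) (bc q (ygen k 0) (ygen k 1))).1 - algebraMap k (FreeAlgebra k (Fin 2)) lam₃} : Set (FreeAlgebra k (Fin 2))) :=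
  statement_9_general ζ hζ lam₁ lam₂ lam₃ q hq
end

section
/- Let k be an algebraically closed field of characteristic 0, q ∈ k a root of unity of order at least 3, and a ∈ k a nonzero scalar. Let the 3×3 braiding matrix be q_{11} = q, q_{12} = a, q_{13} = q⁻¹a⁻², q_{21} = q⁻¹a⁻¹, q_{22} = −1, q_{23} = qa, q_{31} = qa², q_{32} = a⁻¹, q_{33} = q⁻¹ (super type A₃). Then for every ν ∈ k, the quotient of the free algebra k⟨y_1,y_2,y_3⟩ by the two-sided ideal generated by y_2², y_{13}, y_{112}, y_{332}, and [y_{(13)}, y_2]_c − ν is a nontrivial algebra. -/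
/-!
All five relations are killed by the representation of the free algebra on `k⁴` given by
`y₁ ↦ E₃₀`, `y₂ ↦ E₀₂ + E₁₃`, `y₃ ↦ ν E₂₁` (matrix indices from `0`; the generator `y_i` is
`FreeAlgebra.ι k (i - 1)`), which sends `1` to the nonzero identity matrix. The first four
relations hold because the relevant products of these matrix units vanish. For the deformed
one, `y_{(13)}` goes to `ν (E₃₁ + E₂₀)` because `q₁₂ q₁₃ q₂₃ = 1`, and then `q₁₂ q₂₂ q₃₂ = -1`
turns `[y_{(13)}, y₂]_c` into the anticommutator of `ν (E₃₁ + E₂₀)` with `E₀₂ + E₁₃`, which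
is `ν` times the identity.
-/

open Matrix

theorem TwoSidedIdeal.one_notMem_span_of_map_eq_zero {R S F : Type*} [Ring R] [Ring S]
    [Nontrivial S] [FunLike F R S] [RingHomClass F R S] (f : F) {s : Set R}
    (hs : ∀ x ∈ s, f x = 0) : (1 : R) ∉ span s := fun h ↦ by
  have h₁ : (1 : R) ∈ ker f := span_le.2 (fun x hx ↦ (mem_ker f).2 (hs x hx)) h
  exact one_ne_zero (map_one f ▸ (mem_ker f).1 h₁)

section BraidedCommutator

variable {k : Type*} [Field k] {n : ℕ} (q : Fin n → Fin n → k)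

theorem qForm_add_left (α α' β : Fin n → ℕ) :
    qForm q (α + α') β = qForm q α β * qForm q α' β := by
  simp only [qForm, Pi.add_apply, add_mul, pow_add, Finset.prod_mul_distrib]

theorem qForm_add_right (α β β' : Fin n → ℕ) :
    qForm q α (β + β') = qForm q α β * qForm q α β' := by
  simp only [qForm, Pi.add_apply, mul_add, pow_add, Finset.prod_mul_distrib]

theorem qForm_ygen_ygen (i j : Fin n) : qForm q (ygen k i).2 (ygen k j).2 = q i j := by
  simp [qForm, ygen, Finset.prod_ite_eq']

theorem bc_snd (u v : FreeAlgebra k (Fin n) × (Fin n → ℕ)) : (bc q u v).2 = u.2 + v.2 := rfl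

variable {A : Type*} [Ring A] [Algebra k A] (φ : FreeAlgebra k (Fin n) →ₐ[k] A)
  (u v : FreeAlgebra k (Fin n) × (Fin n → ℕ))

theorem map_bc_fst :
    φ (bc q u v).1 = φ u.1 * φ v.1 - qForm q u.2 v.2 • (φ v.1 * φ u.1) := by
  simp [bc]

theorem map_bc_fst_eq_zero (huv : φ u.1 * φ v.1 = 0) (hvu : φ v.1 * φ u.1 = 0) :
    φ (bc q u v).1 = 0 := by
  rw [map_bc_fst, huv, hvu, smul_zero, sub_zero]

theorem map_bc_bc_fst_eq_zero (huu : φ u.1 * φ u.1 = 0) (huvu : φ u.1 * φ v.1 * φ u.1 = 0) :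
    φ (bc q u (bc q u v)).1 = 0 := by
  have hvuu : φ v.1 * φ u.1 * φ u.1 = 0 := by rw [mul_assoc, huu, mul_zero]
  simp only [map_bc_fst, mul_sub, sub_mul, mul_smul_comm, smul_mul_assoc, ← mul_assoc, huu,
    huvu, hvuu, zero_mul, smul_zero, sub_zero]

end BraidedCommutator

section SuperTypeA3

variable {k : Type*} [Field k] (ν : k)

noncomputable def superA3Rep : FreeAlgebra k (Fin 3) →ₐ[k] Matrix (Fin 4) (Fin 4) k :=
  FreeAlgebra.lift k ![single 3 0 1, single 0 2 1 + single 1 3 1, ν • single 2 1 1]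

theorem superA3Rep_ι_zero : superA3Rep ν (FreeAlgebra.ι k 0) = single 3 0 1 :=
  FreeAlgebra.lift_ι_apply _ _

theorem superA3Rep_ι_one : superA3Rep ν (FreeAlgebra.ι k 1) = single 0 2 1 + single 1 3 1 :=
  FreeAlgebra.lift_ι_apply _ _

theorem superA3Rep_ι_two : superA3Rep ν (FreeAlgebra.ι k 2) = ν • single 2 1 1 :=
  FreeAlgebra.lift_ι_apply _ _

theorem superA3Rep_map_relations_eq_zero (q : Fin 3 → Fin 3 → k) :
    superA3Rep ν (FreeAlgebra.ι k 1 ^ 2) = 0 ∧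
    superA3Rep ν (bc q (ygen k 0) (ygen k 2)).1 = 0 ∧
    superA3Rep ν (bc q (ygen k 0) (bc q (ygen k 0) (ygen k 1))).1 = 0 ∧
    superA3Rep ν (bc q (ygen k 2) (bc q (ygen k 2) (ygen k 1))).1 = 0 := by
  refine ⟨?_, map_bc_fst_eq_zero _ _ _ _ ?_ ?_, map_bc_bc_fst_eq_zero _ _ _ _ ?_ ?_,
    map_bc_bc_fst_eq_zero _ _ _ _ ?_ ?_⟩ <;>
  simp [sq, ygen, superA3Rep_ι_zero, superA3Rep_ι_one, superA3Rep_ι_two, mul_add, add_mul]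

theorem superA3Rep_y13 {q : Fin 3 → Fin 3 → k} (hq : q 0 1 * q 0 2 * q 1 2 = 1) :
    superA3Rep ν (bc q (ygen k 0) (bc q (ygen k 1) (ygen k 2))).1
      = ν • (single 3 1 1 + single 2 0 1) := by
  simp only [map_bc_fst, bc_snd, qForm_add_right, qForm_ygen_ygen]
  simp [ygen, superA3Rep_ι_zero, superA3Rep_ι_one, superA3Rep_ι_two, mul_add, add_mul, mul_sub,
    sub_mul, ← mul_assoc, hq]

theorem superA3Rep_bc_y13_y2 {q : Fin 3 → Fin 3 → k} (hq₁ : q 0 1 * q 0 2 * q 1 2 = 1)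
    (hq₂ : q 0 1 * q 1 1 * q 2 1 = -1) :
    superA3Rep ν (bc q (bc q (ygen k 0) (bc q (ygen k 1) (ygen k 2))) (ygen k 1)).1 = ν • 1 := by
  rw [map_bc_fst, superA3Rep_y13 ν hq₁]
  simp only [bc_snd, qForm_add_left, qForm_ygen_ygen]
  simp only [ygen, superA3Rep_ι_one, mul_add, add_mul, smul_add, smul_single, smul_eq_mul, mul_one,
    single_mul_single_same, single_mul_single_of_ne, ne_eq, Fin.reduceEq, not_false_eq_true,
    one_ne_zero, zero_ne_one, one_mul, zero_add, add_zero]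
  rw [← mul_assoc, hq₂, neg_one_mul, ← sum_single_one, Fin.sum_univ_four]
  simp only [smul_add, smul_single, smul_eq_mul, mul_one, ← single_neg]
  abel

end SuperTypeA3

theorem statement_13_general {k : Type*} [Field k]
    (m : ℕ) (hm : 3 ≤ m) (q₀ : k) (hq₀ : IsPrimitiveRoot q₀ m) (a : k) (ha : a ≠ 0)
    (ν : k)
    (q : Fin 3 → Fin 3 → k) (hq : q = ![![q₀, a, q₀⁻¹ * (a ^ 2)⁻¹], ![q₀⁻¹ * a⁻¹, -1, q₀ * a], ![q₀ * a ^ 2, a⁻¹, q₀⁻¹]]) :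
    (1 : FreeAlgebra k (Fin 3)) ∉ TwoSidedIdeal.span
      ({FreeAlgebra.ι k (1 : Fin 3) ^ 2,
        (bc q (ygen k 0) (ygen k 2)).1,
        (bc q (ygen k 0) (bc q (ygen k 0) (ygen k 1))).1,
        (bc q (ygen k 2) (bc q (ygen k 2) (ygen k 1))).1,
        (bc q (bc q (ygen k 0) (bc q (ygen k 1) (ygen k 2))) (ygen k 1)).1 - algebraMap k (FreeAlgebra k (Fin 3)) ν} : Set (FreeAlgebra k (Fin 3))) := by
  have hq₀_ne : q₀ ≠ 0 := hq₀.ne_zero (by omega)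
  have hq₁ : q 0 1 * q 0 2 * q 1 2 = 1 := by
    simp [hq, field]
  have hq₂ : q 0 1 * q 1 1 * q 2 1 = -1 := by
    simp [hq, field]
  obtain ⟨h₁, h₂, h₃, h₄⟩ := superA3Rep_map_relations_eq_zero ν q
  refine TwoSidedIdeal.one_notMem_span_of_map_eq_zero (superA3Rep ν) ?_
  rintro x (rfl | rfl | rfl | rfl | rfl)
  exacts [h₁, h₂, h₃, h₄, by rw [map_sub, superA3Rep_bc_y13_y2 ν hq₁ hq₂, AlgHom.commutes,
    Algebra.algebraMap_eq_smul_one, sub_self]]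

theorem statement_13 {k : Type*} [Field k] [IsAlgClosed k] [CharZero k]
    (m : ℕ) (hm : 3 ≤ m) (q₀ : k) (hq₀ : IsPrimitiveRoot q₀ m) (a : k) (ha : a ≠ 0)
    (ν : k)
    (q : Fin 3 → Fin 3 → k) (hq : q = ![![q₀, a, q₀⁻¹ * (a ^ 2)⁻¹], ![q₀⁻¹ * a⁻¹, -1, q₀ * a], ![q₀ * a ^ 2, a⁻¹, q₀⁻¹]]) :
    (1 : FreeAlgebra k (Fin 3)) ∉ TwoSidedIdeal.span
      ({FreeAlgebra.ι k (1 : Fin 3) ^ 2,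
        (bc q (ygen k 0) (ygen k 2)).1,
        (bc q (ygen k 0) (bc q (ygen k 0) (ygen k 1))).1,
        (bc q (ygen k 2) (bc q (ygen k 2) (ygen k 1))).1,
        (bc q (bc q (ygen k 0) (bc q (ygen k 1) (ygen k 2))) (ygen k 1)).1 - algebraMap k (FreeAlgebra k (Fin 3)) ν} : Set (FreeAlgebra k (Fin 3))) :=
  statement_13_general m hm q₀ hq₀ a ha ν q hq
end
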